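/- Let 𝒜 = ⟨A,R⟩ be a structure, Q ⊆ R, u,v ∈ Uf(A), and let w̄ = ⟨w_0,…,w_n⟩ be a Q^ue-road from u to v with distinguishing sets D_{w_0},…,D_{w_n} for the w_i. Then for every X ∈ u, the ultrafilter road Δ(X, Q^ue[w̄]) belongs to v. -/
import Mathlib


open FirstOrder Cardinal

namespace UEx

/-- Elements of infinite in- or out-degree. -/
def RInf (R : A → A → Prop) : Set A :=
  {w | {v | R w v}.Infinite ∨ {v | R v w}.Infinite}

/-- A uniform finite bound on all in- and out-degrees. -/
def Bounded (R : A → A → Prop) : Prop :=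
  ∃ n : ℕ, ∀ w : A, {v | R w v}.Finite ∧ {v | R v w}.Finite ∧
    {v | R w v}.ncard ≤ n ∧ {v | R v w}.ncard ≤ n

/-- Almost bounded: finitely many elements of infinite degree, and a uniform
finite bound on the degrees of the remaining elements. -/
def AlmostBounded (R : A → A → Prop) : Prop :=
  (RInf R).Finite ∧ ∃ n : ℕ, ∀ w ∉ RInf R,
    {v | R w v}.ncard ≤ n ∧ {v | R v w}.ncard ≤ n

/-- P = {(s,t) ∈ R : s ∈ R∞ or t ∈ R∞}. -/
def PRel (R : A → A → Prop) (s t : A) : Prop := R s t ∧ (s ∈ RInf R ∨ t ∈ RInf R)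

/-- S = R \ P. -/
def SRel (R : A → A → Prop) (s t : A) : Prop := R s t ∧ ¬(s ∈ RInf R ∨ t ∈ RInf R)

/-- The ultrafilter extension of a binary relation. -/
def ueRel (Q : A → A → Prop) (u v : Ultrafilter A) : Prop :=
  ∀ X ∈ v, {w | ∃ s ∈ X, Q w s} ∈ u

/-- The ultrafilter road `Δ(X, Q^ue[w̄])` based on `X`, along the directions `dir`
and the distinguishing sets `D`. -/
def roadSet {A : Type*} (Q : A → A → Prop) (dir : ℕ → Bool) (D : ℕ → Set A)
    (X : Set A) : ℕ → Set A
  | 0 => X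
  | i + 1 =>
      (cond (dir i) {s | ∃ w ∈ roadSet Q dir D X i, Q w s}
        {w | ∃ s ∈ roadSet Q dir D X i, Q w s}) ∩ D (i + 1)
/-- Along a `Q^ue`-road `w 0 = u, …, w n = v` with distinguishing sets `D`, the
ultrafilter road `Δ(X, Q^ue[w̄])` based on any `X ∈ u` belongs to `v`. -/
theorem roadSet_mem {A : Type*} (R Q : A → A → Prop)
    (hQR : ∀ x y, Q x y → R x y)
    (n : ℕ) (w : ℕ → Ultrafilter A) (dir : ℕ → Bool) (u v : Ultrafilter A)
    (hw0 : w 0 = u) (hwn : w n = v)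
    (hroad : ∀ i < n, cond (dir i) (ueRel Q (w i) (w (i + 1))) (ueRel Q (w (i + 1)) (w i)))
    (D : ℕ → Set A)
    (hdisj : ∀ i ≤ n, ∀ j ≤ n, i ≠ j → Disjoint (D i) (D j))
    (hD : ∀ i ≤ n, ∀ j ≤ n, (D j ∈ w i ↔ i = j))
    (X : Set A) (hX : X ∈ u) :
    roadSet Q dir D X n ∈ v := by
  subst hw0 hwn
  have key : ∀ i ≤ n, roadSet Q dir D X i ∈ w i := by
    intro i
    induction i with
    | zero => intro _; simpa [roadSet] using hX
    | succ i ih =>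
      intro hi
      have hin : i < n := hi
      have hΔ := ih (le_of_lt hin)
      have hDmem : D (i + 1) ∈ w (i + 1) :=
        (hD (i + 1) hi (i + 1) hi).mpr rfl
      have hr := hroad i hin
      cases hdir : dir i with
      | false =>
        rw [hdir] at hr
        simp only [roadSet, hdir, cond_false]
        exact (w (i + 1)).toFilter.inter_mem (hr _ hΔ) hDmem
      | true =>
        rw [hdir] at hr
        simp only [roadSet, hdir, cond_true]
        have hmain : {s | ∃ a ∈ roadSet Q dir D X i, Q a s} ∈ w (i + 1) := by
          rcases (w (i + 1)).mem_or_compl_mem {s | ∃ a ∈ roadSet Q dir D X i, Q a s}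
            with h | h
          · exact h
          · exfalso
            have h2 := hr _ h
            have h3 : {a | ∃ s ∈ ({s | ∃ a ∈ roadSet Q dir D X i, Q a s} : Set A)ᶜ, Q a s}
                ∩ roadSet Q dir D X i ∈ w i := (w i).toFilter.inter_mem h2 hΔ
            obtain ⟨a, ⟨s, hs, hQ⟩, ha⟩ := Ultrafilter.nonempty_of_mem h3
            exact hs ⟨a, ha, hQ⟩
        exact (w (i + 1)).toFilter.inter_mem hmain hDmem
  exact key n le_rfl

end UEx
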